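/- Let A be symmetric positive semi-definite with A𝟏 = 0 and Ax = e_R − e_L (as for an SBP second-derivative operator). Then A has exactly one zero eigenvalue (i.e., rank(A) = n) if and only if its central block Ā is invertible. -/

import Mathlib

open Matrix

noncomputable section

def onesVec (n : ℕ) : Fin (n+1) → ℝ := fun _ => 1

def gridVec (n : ℕ) : Fin (n+1) → ℝ := fun i => (i : ℝ) / n

def eL (n : ℕ) : Fin (n+1) → ℝ := fun i => if i.1 = 0 then 1 else 0

def eR (n : ℕ) : Fin (n+1) → ℝ := fun i => if i.1 = n then 1 else 0

def interiorEmb (n : ℕ) : Fin (n-1) → Fin (n+1) :=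
  fun i => ⟨i.1 + 1, by have := i.isLt; omega⟩

def centralBlock (n : ℕ) (A : Matrix (Fin (n+1)) (Fin (n+1)) ℝ) :
    Matrix (Fin (n-1)) (Fin (n-1)) ℝ :=
  A.submatrix (interiorEmb n) (interiorEmb n)

def pad (n : ℕ) (B : Matrix (Fin (n-1)) (Fin (n-1)) ℝ) :
    Matrix (Fin (n+1)) (Fin (n+1)) ℝ :=
  fun i j =>
    if hi : 0 < i.1 ∧ i.1 < n then
      if hj : 0 < j.1 ∧ j.1 < n then
        B ⟨i.1 - 1, by omega⟩ ⟨j.1 - 1, by omega⟩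
      else 0
    else 0

def G2 (n : ℕ) (A : Matrix (Fin (n+1)) (Fin (n+1)) ℝ) :
    Matrix (Fin (n+1)) (Fin (n+1)) ℝ :=
  pad n (centralBlock n A)⁻¹

def Aplus (n : ℕ) (A : Matrix (Fin (n+1)) (Fin (n+1)) ℝ) :
    Matrix (Fin (n+1)) (Fin (n+1)) ℝ :=
  (1 - ((n : ℝ) + 1)⁻¹ • vecMulVec (onesVec n) (onesVec n)) * G2 n A *
      (1 - ((n : ℝ) + 1)⁻¹ • vecMulVec (onesVec n) (onesVec n)) +
    vecMulVec (gridVec n - (1/2 : ℝ) • onesVec n)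
      (gridVec n - (1/2 : ℝ) • onesVec n)

/-!
Because `A 𝟏 = 0`, `rank A = n` says `ker A = span 𝟏`, i.e. the only null vector of `A` vanishing
at the left node is `0`. By symmetry a null vector `z` has `z_R - z_L = z ⬝ A x = (A z) ⬝ x = 0`, so
vanishing at the left node means vanishing at both boundary nodes, i.e. being the zero extension `w`
of an interior vector `v`. For such `w`, `A w = 0` restricts to `Ā v = 0`; conversely `Ā v = 0`
gives `wᵀ A w = vᵀ Ā v = 0`, hence `A w = 0` by semidefiniteness. So `Ā` is nonsingular iff
`ker A = span 𝟏`.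
-/

open Function

section ExtendByZero

variable {ι κ R : Type*} {e : κ → ι}

theorem Function.extend_comp_eq_self_of_eq_zero [Zero R] (he : Injective e) {w : ι → R}
    (hw : ∀ i ∉ Set.range e, w i = 0) : extend e (w ∘ e) 0 = w := by
  funext i
  by_cases hi : i ∈ Set.range e
  · obtain ⟨k, rfl⟩ := hi
    exact he.extend_apply _ _ k
  · rw [extend_apply' _ _ _ hi, hw i hi, Pi.zero_apply]

theorem Function.star_extend_zero [AddMonoid R] [StarAddMonoid R] (he : Injective e) (v : κ → R) :
    star (extend e v 0) = extend e (star v) 0 := by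
  funext i
  by_cases hi : ∃ k, e k = i
  · obtain ⟨k, rfl⟩ := hi
    simp [he.extend_apply]
  · simp [extend_apply' _ _ _ hi]

variable [Fintype ι] [Fintype κ] [CommSemiring R]

theorem Matrix.mulVec_extend_zero_apply (he : Injective e) (A : Matrix ι ι R) (v : κ → R)
    (k : κ) : (A *ᵥ extend e v 0) (e k) = (A.submatrix e e *ᵥ v) k :=
  (Fintype.sum_of_injective e he _ _
    (fun i hi => by rw [extend_apply' _ _ _ hi, Pi.zero_apply, mul_zero])
    (fun j => by rw [he.extend_apply]; rfl)).symm

theorem Matrix.extend_zero_dotProduct_mulVec_extend_zero (he : Injective e) (A : Matrix ι ι R)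
    (u v : κ → R) :
    extend e u 0 ⬝ᵥ A *ᵥ extend e v 0 = u ⬝ᵥ A.submatrix e e *ᵥ v :=
  (Fintype.sum_of_injective e he _ _
    (fun i hi => by rw [extend_apply' _ _ _ hi, Pi.zero_apply, zero_mul])
    (fun k => by rw [he.extend_apply, Matrix.mulVec_extend_zero_apply he])).symm

end ExtendByZero

open scoped ComplexOrder in
theorem Matrix.PosSemidef.isUnit_det_submatrix_iff {ι κ 𝕜 : Type*} [Fintype ι]
    [Fintype κ] [DecidableEq κ] [RCLike 𝕜] {A : Matrix ι ι 𝕜} (hA : A.PosSemidef) {e : κ → ι}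
    (he : Injective e) :
    IsUnit (A.submatrix e e).det ↔
      ∀ w, A *ᵥ w = 0 → (∀ i ∉ Set.range e, w i = 0) → w = 0 := by
  rw [isUnit_iff_ne_zero, Ne, ← exists_mulVec_eq_zero_iff]
  constructor
  · intro hdet w hAw hw
    rw [← extend_comp_eq_self_of_eq_zero he hw] at hAw ⊢
    by_contra hw0
    refine hdet ⟨w ∘ e, fun h => hw0 (by rw [h, extend_zero]), ?_⟩
    funext k
    rw [← mulVec_extend_zero_apply he, hAw, Pi.zero_apply, Pi.zero_apply]
  · rintro hker ⟨v, hv0, hv⟩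
    have hquad : star (extend e v 0) ⬝ᵥ A *ᵥ extend e v 0 = 0 := by
      rw [star_extend_zero he, extend_zero_dotProduct_mulVec_extend_zero he, hv, dotProduct_zero]
    have hw := hker _ ((hA.dotProduct_mulVec_zero_iff _).1 hquad)
      (fun i hi => extend_apply' _ _ _ (by simpa using hi))
    exact hv0 (by rw [← extend_comp he v 0, hw]; rfl)

theorem Submodule.eq_span_singleton_iff_of_apply_ne_zero {K ι : Type*} [Field K]
    {S : Submodule K (ι → K)} {u : ι → K} (hu : u ∈ S) {i₀ : ι} (hu₀ : u i₀ ≠ 0) :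
    S = K ∙ u ↔ ∀ w ∈ S, w i₀ = 0 → w = 0 := by
  constructor
  · rintro rfl w hw hw₀
    obtain ⟨c, rfl⟩ := mem_span_singleton.1 hw
    rw [Pi.smul_apply, smul_eq_mul, mul_eq_zero] at hw₀
    rw [hw₀.resolve_right hu₀, zero_smul]
  · intro h
    refine le_antisymm (fun z hz => ?_) ((span_singleton_le_iff_mem u S).2 hu)
    have hz' : z - (z i₀ / u i₀) • u = 0 :=
      h _ (sub_mem hz (smul_mem S _ hu)) (by simp [div_mul_cancel₀ _ hu₀])
    rw [sub_eq_zero.1 hz']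
    exact smul_mem _ _ (mem_span_singleton_self u)

theorem Matrix.rank_add_one_eq_iff_ker_eq_span {m n K : Type*} [Fintype n] [Field K]
    (A : Matrix m n K) {u : n → K} (hu : A *ᵥ u = 0) (hu0 : u ≠ 0) :
    A.rank + 1 = Fintype.card n ↔ LinearMap.ker A.mulVecLin = K ∙ u := by
  have hmem : u ∈ LinearMap.ker A.mulVecLin := hu
  rw [← Module.finrank_fintype_fun_eq_card (R := K), ← A.mulVecLin.finrank_range_add_finrank_ker,
    rank, Nat.add_left_cancel_iff, eq_comm]
  exact ⟨fun h => eq_span_singleton_of_mem_of_finrank_eq_one h hmem hu0,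
    fun h => h ▸ finrank_span_singleton hu0⟩

theorem eR_eq_single (n : ℕ) : eR n = Pi.single (Fin.last n) 1 := by
  funext i
  simp [eR, Pi.single_apply, Fin.ext_iff]

theorem eL_eq_single (n : ℕ) : eL n = Pi.single 0 1 := by
  funext i
  simp only [eL, Pi.single_apply, Fin.ext_iff, Fin.val_zero]

theorem interiorEmb_injective (n : ℕ) : Injective (interiorEmb n) :=
  fun i j h => Fin.ext (by simpa [interiorEmb] using h)

theorem notMem_range_interiorEmb_iff {n : ℕ} {i : Fin (n + 1)} :
    i ∉ Set.range (interiorEmb n) ↔ i = 0 ∨ i = Fin.last n := by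
  simp only [Set.mem_range, not_exists, interiorEmb, Fin.ext_iff, Fin.val_zero, Fin.val_last]
  refine ⟨fun h => ?_, fun h k => ?_⟩
  · by_contra! hi
    exact h ⟨i - 1, by omega⟩ (by simp only; omega)
  · have := k.isLt
    omega

theorem apply_last_eq_apply_zero_of_mulVec_eq_zero {n : ℕ}
    {A : Matrix (Fin (n + 1)) (Fin (n + 1)) ℝ} (hA : A.IsSymm) {x : Fin (n + 1) → ℝ} (hx : A *ᵥ x = eR n - eL n) {z : Fin (n + 1) → ℝ}
    (hz : A *ᵥ z = 0) : z (Fin.last n) = z 0 := by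
  have hzx : z ⬝ᵥ A *ᵥ x = 0 := by
    rw [dotProduct_mulVec, ← mulVec_transpose, hA.eq, hz, zero_dotProduct]
  rwa [hx, eR_eq_single, eL_eq_single, dotProduct_sub, dotProduct_single, dotProduct_single,
    mul_one, mul_one, sub_eq_zero] at hzx

theorem rank_n_iff_central_invertible_general
    (n : ℕ) (A : Matrix (Fin (n+1)) (Fin (n+1)) ℝ)
    (hpsd : A.PosSemidef)
    (h1 : A *ᵥ onesVec n = 0)
    (hx : A *ᵥ gridVec n = eR n - eL n) :
    A.rank = n ↔ IsUnit (centralBlock n A).det := by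
  have hends (z) (hz : A *ᵥ z = 0) : z (Fin.last n) = z 0 :=
    apply_last_eq_apply_zero_of_mulVec_eq_zero (isHermitian_iff_isSymm.1 hpsd.isHermitian) hx hz
  calc A.rank = n ↔ LinearMap.ker A.mulVecLin = ℝ ∙ onesVec n := by
        rw [← A.rank_add_one_eq_iff_ker_eq_span h1 (fun h => one_ne_zero (congrFun h 0)),
          Fintype.card_fin, Nat.add_right_cancel_iff]
    _ ↔ ∀ z, A *ᵥ z = 0 → z 0 = 0 → z = 0 :=
        Submodule.eq_span_singleton_iff_of_apply_ne_zero h1 one_ne_zero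
    _ ↔ ∀ z, A *ᵥ z = 0 → (∀ i ∉ Set.range (interiorEmb n), z i = 0) → z = 0 := by
        refine forall_congr' fun z => imp_congr_right fun hz => imp_congr_left ⟨fun h0 i hi => ?_,
          fun h => h 0 (notMem_range_interiorEmb_iff.2 (Or.inl rfl))⟩
        rcases notMem_range_interiorEmb_iff.1 hi with rfl | rfl
        exacts [h0, (hends z hz).trans h0]
    _ ↔ IsUnit (centralBlock n A).det :=
        (hpsd.isUnit_det_submatrix_iff (interiorEmb_injective n)).symm

theorem rank_n_iff_central_invertible
    (n : ℕ) (hn : 2 ≤ n) (A : Matrix (Fin (n+1)) (Fin (n+1)) ℝ)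
    (hpsd : A.PosSemidef)
    (h1 : A *ᵥ onesVec n = 0)
    (hx : A *ᵥ gridVec n = eR n - eL n) :
    A.rank = n ↔ IsUnit (centralBlock n A).det :=
  rank_n_iff_central_invertible_general n A hpsd h1 hx
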